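/- Under the same hypotheses as the previous statement (Q_j an α₁-covering, P_i an α₂-covering, 0 ≤ α₁ ≤ α₂ ≤ 1), for Ω_i = {j ∈ J : Q_j ∩ P_i ≠ ∅} there is a constant c > 0 such that |Ω_i| ≤ c ⟨ξ_i⟩^{d(α₂-α₁)} for all i ∈ I. -/

import Mathlib

/-!
Fix `i` and put `t = ⟨ξ i⟩`. A point of `Q j ∩ P i` ties `⟨x⟩` to `t` through `|P i|`, so every
`Q j` meeting `P i` has `|Q j| ≍ t^(α₁ d)` and, having inner and outer balls of comparable radii,
lies in a ball around `ξ i` of measure `≲ t^(α₂ d)`. These balls are concentric, hence nested, and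
the `Q j` overlap at most `n₀` times, so `#S · t^(α₁ d) ≲ n₀ t^(α₂ d)` for every finite `S ⊆ Ωᵢ`.
-/

open MeasureTheory

/-- Japanese bracket ⟨x⟩ = (1+|x|²)^(1/2). -/
noncomputable def jb {d : ℕ} (x : EuclideanSpace ℝ (Fin d)) : ℝ :=
  (1 + ‖x‖ ^ 2) ^ ((1 : ℝ) / 2)

open Metric Finset ENNReal

lemma one_le_jb {d : ℕ} (x : EuclideanSpace ℝ (Fin d)) : 1 ≤ jb x :=
  Real.one_le_rpow (by nlinarith [sq_nonneg ‖x‖]) (by norm_num)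

lemma Real.rpow_le_mul_rpow_of_exponent_le {a b C p q : ℝ} (ha : 0 ≤ a) (hb : 0 < b)
    (hC : 1 ≤ C) (hp : 0 ≤ p) (hpq : p ≤ q) (h : a ^ q ≤ C * b ^ q) : a ^ p ≤ C * b ^ p := by
  rcases le_total a b with hab | hba
  · calc a ^ p ≤ b ^ p := Real.rpow_le_rpow ha hab hp
      _ ≤ C * b ^ p := le_mul_of_one_le_left (Real.rpow_nonneg hb.le p) hC
  · have hq : (a / b) ^ q ≤ C := by
      rwa [Real.div_rpow ha hb.le, div_le_iff₀ (Real.rpow_pos_of_pos hb q)]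
    have hpq' : (a / b) ^ p ≤ (a / b) ^ q :=
      Real.rpow_le_rpow_of_exponent_le ((one_le_div hb).2 hba) hpq
    rw [← div_le_iff₀ (Real.rpow_pos_of_pos hb p), ← Real.div_rpow ha hb.le]
    exact hpq'.trans hq

lemma Set.finite_and_ncard_le_of_forall_finset_card_le {α : Type*} {s : Set α} {C : ℝ}
    (h : ∀ t : Finset α, ↑t ⊆ s → (#t : ℝ) ≤ C) : s.Finite ∧ (s.ncard : ℝ) ≤ C := by
  have hs : s.Finite := by
    by_contra hinf
    obtain ⟨t, hts, ht⟩ := Set.Infinite.exists_subset_card_eq hinf (⌊C⌋₊ + 1)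
    have := h t hts
    rw [ht] at this
    push_cast at this
    linarith [Nat.lt_floor_add_one C]
  refine ⟨hs, ?_⟩
  rw [Set.ncard_eq_toFinset_card s hs]
  exact h _ hs.coe_toFinset.subset

section BoundedOverlap

variable {α ι : Type*} {Q : ι → Set α} {n : ℕ}

open Classical in
lemma card_filter_mem_le_of_encard_le (hQ : ∀ j, {j' | (Q j ∩ Q j').Nonempty}.encard ≤ n)
    (S : Finset ι) (x : α) : #{j ∈ S | x ∈ Q j} ≤ n := by
  rcases (S.filter (x ∈ Q ·)).eq_empty_or_nonempty with hS | ⟨j₀, hj₀⟩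
  · simp only [hS, card_empty, zero_le]
  have hsub : (↑(S.filter (x ∈ Q ·)) : Set ι) ⊆ {j' | (Q j₀ ∩ Q j').Nonempty} :=
    fun j hj => ⟨x, (mem_filter.1 hj₀).2, (mem_filter.1 hj).2⟩
  have := (Set.encard_mono hsub).trans (hQ j₀)
  rwa [Set.encard_coe_eq_coe_finsetCard, Nat.cast_le] at this

lemma sum_measure_le_mul_measure_biUnion [MeasurableSpace α] (μ : Measure α)
    (hQm : ∀ j, MeasurableSet (Q j)) (hQ : ∀ j, {j' | (Q j ∩ Q j').Nonempty}.encard ≤ n)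
    (S : Finset ι) : ∑ j ∈ S, μ (Q j) ≤ n * μ (⋃ j ∈ S, Q j) := by
  classical
  set ν := μ.restrict (⋃ j ∈ S, Q j)
  have hcount : ∀ x, ∑ j ∈ S, (Q j).indicator 1 x ≤ (n : ℝ≥0∞) := fun x => by
    simp only [Set.indicator_apply, Pi.one_apply, sum_boole]
    exact_mod_cast card_filter_mem_le_of_encard_le hQ S x
  calc ∑ j ∈ S, μ (Q j) = ∑ j ∈ S, ν (Q j) :=
        sum_congr rfl fun j hj => (Measure.restrict_eq_self μ (Set.subset_biUnion_of_mem hj)).symm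
    _ = ∫⁻ x, ∑ j ∈ S, (Q j).indicator 1 x ∂ν := by
        rw [lintegral_finsetSum _ fun j _ => measurable_one.indicator (hQm j)]
        exact sum_congr rfl fun j _ => (lintegral_indicator_one (hQm j)).symm
    _ ≤ ∫⁻ _, (n : ℝ≥0∞) ∂ν := lintegral_mono hcount
    _ = n * μ (⋃ j ∈ S, Q j) := by rw [lintegral_const, Measure.restrict_apply_univ]

end BoundedOverlap

lemma measure_biUnion_closedBall_le {X ι : Type*} [PseudoMetricSpace X] [MeasurableSpace X]
    (μ : Measure X) (S : Finset ι) (y : X) (r : ι → ℝ) {m : ℝ≥0∞}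
    (h : ∀ j ∈ S, μ (closedBall y (r j)) ≤ m) : μ (⋃ j ∈ S, closedBall y (r j)) ≤ m := by
  rcases S.eq_empty_or_nonempty with rfl | hS
  · simp
  obtain ⟨j, hj, hmax⟩ := S.exists_max_image r hS
  exact (measure_mono (Set.iUnion₂_subset fun k hk =>
    closedBall_subset_closedBall (hmax k hk))).trans (h j hj)

lemma subset_closedBall_of_inter_nonempty {X : Type*} [PseudoMetricSpace X] {A B : Set X}
    {a b y : X} {r s : ℝ} (hA : A ⊆ closedBall a r) (hB : B ⊆ closedBall b s)
    (hAB : (A ∩ B).Nonempty) (hy : y ∈ B) : A ⊆ closedBall y (2 * r + 2 * s) := by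
  obtain ⟨x, hxA, hxB⟩ := hAB
  intro z hz
  have hza := mem_closedBall.1 (hA hz)
  have hxa := mem_closedBall.1 (hA hxA)
  have hxb := mem_closedBall.1 (hB hxB)
  have hyb := mem_closedBall.1 (hB hy)
  rw [mem_closedBall]
  linarith [dist_triangle z x y, dist_triangle_right z x a, dist_triangle_right x y b]

lemma measure_closedBall_mul_le_of_closedBall_subset {E : Type*} [NormedAddCommGroup E]
    [NormedSpace ℝ E] [MeasurableSpace E] [BorelSpace E] [FiniteDimensional ℝ E]
    (μ : Measure E) [μ.IsAddHaarMeasure] {A : Set E} {a : E} {ρ : ℝ} (hρ : 0 ≤ ρ)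
    (hA : closedBall a ρ ⊆ A) (y : E) {c : ℝ} (hc : 0 ≤ c) :
    μ (closedBall y (c * ρ)) ≤ ENNReal.ofReal (c ^ Module.finrank ℝ E) * μ A := by
  rw [Measure.addHaar_closedBall_mul μ y hc hρ, ← Measure.addHaar_closedBall_center μ a]
  gcongr

def IsBallComparable {X : Type*} [PseudoMetricSpace X] (K : ℝ) (A : Set X) : Prop :=
  ∃ (a b : X) (ρ R : ℝ), 0 < ρ ∧ closedBall a ρ ⊆ A ∧ A ⊆ closedBall b R ∧ R ≤ K * ρ

lemma IsBallComparable.measure_ne_top {X : Type*} [PseudoMetricSpace X] [ProperSpace X]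
    [MeasurableSpace X] (μ : Measure X) [IsFiniteMeasureOnCompacts μ] {K : ℝ} {A : Set X}
    (hA : IsBallComparable K A) : μ A ≠ ∞ := by
  obtain ⟨-, b, -, R, -, -, hout, -⟩ := hA
  exact ((measure_mono hout).trans_lt measure_closedBall_lt_top).ne

lemma IsBallComparable.exists_closedBall_superset_measure_le {E : Type*} [NormedAddCommGroup E]
    [NormedSpace ℝ E] [MeasurableSpace E] [BorelSpace E] [FiniteDimensional ℝ E]
    (μ : Measure E) [μ.IsAddHaarMeasure] {K : ℝ} {A B : Set E} (hK : 0 ≤ K)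
    (hA : IsBallComparable K A) (hB : IsBallComparable K B) (hAB : (A ∩ B).Nonempty) {y : E}
    (hy : y ∈ B) :
    ∃ r, A ⊆ closedBall y r ∧
      μ (closedBall y r) ≤ ENNReal.ofReal ((4 * K) ^ Module.finrank ℝ E) * max (μ A) (μ B) := by
  obtain ⟨a, b, ρ, R, hρ, hAin, hAout, hR⟩ := hA
  obtain ⟨a', b', ρ', R', hρ', hBin, hBout, hR'⟩ := hB
  refine ⟨4 * K * max ρ ρ', fun z hz => ?_, ?_⟩
  · refine closedBall_subset_closedBall ?_
      (subset_closedBall_of_inter_nonempty hAout hBout hAB hy hz)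
    nlinarith [le_max_left ρ ρ', le_max_right ρ ρ']
  · rcases le_total ρ ρ' with h | h
    · rw [max_eq_right h]
      exact (measure_closedBall_mul_le_of_closedBall_subset μ hρ'.le hBin y (by positivity)).trans
        (by gcongr; exact le_max_right _ _)
    · rw [max_eq_left h]
      exact (measure_closedBall_mul_le_of_closedBall_subset μ hρ.le hAin y (by positivity)).trans
        (by gcongr; exact le_max_left _ _)

def IsMeasureComparable {d : ℕ} (κ α : ℝ) (A : Set (EuclideanSpace ℝ (Fin d))) : Prop :=
  ∀ x ∈ A, κ⁻¹ * jb x ^ (α * d) ≤ (volume A).toReal ∧ (volume A).toReal ≤ κ * jb x ^ (α * d)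

lemma IsMeasureComparable.bounds_of_inter_nonempty {d : ℕ} {κ α₁ α₂ : ℝ} (hκ : 1 ≤ κ)
    (h1 : 0 ≤ α₁) (h2 : α₁ ≤ α₂) {A B : Set (EuclideanSpace ℝ (Fin d))}
    (hA : IsMeasureComparable κ α₁ A) (hB : IsMeasureComparable κ α₂ B) (hAB : (A ∩ B).Nonempty)
    {y : EuclideanSpace ℝ (Fin d)} (hy : y ∈ B) :
    jb y ^ (α₁ * d) ≤ κ ^ 3 * (volume A).toReal ∧
      (volume A).toReal ≤ κ ^ 3 * jb y ^ (α₂ * d) := by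
  obtain ⟨x, hxA, hxB⟩ := hAB
  have hκ0 : 0 < κ := zero_lt_one.trans_le hκ
  have hp : 0 ≤ α₁ * d := by positivity
  have hpq : α₁ * d ≤ α₂ * d := by gcongr
  obtain ⟨hAx, hAx'⟩ := hA x hxA
  obtain ⟨hBx, hBx'⟩ := hB x hxB
  obtain ⟨hBy, hBy'⟩ := hB y hy
  rw [inv_mul_le_iff₀ hκ0] at hAx hBx hBy
  have hx : 0 < jb x := zero_lt_one.trans_le (one_le_jb x)
  have hy0 : 0 < jb y := zero_lt_one.trans_le (one_le_jb y)
  -- `B` ties ⟨x⟩ to ⟨y⟩ at the exponent `α₂ d`, which transfers down to `α₁ d`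
  have hxy : jb x ^ (α₁ * d) ≤ κ ^ 2 * jb y ^ (α₁ * d) :=
    Real.rpow_le_mul_rpow_of_exponent_le hx.le hy0
      (one_le_pow₀ hκ) hp hpq (by nlinarith)
  have hyx : jb y ^ (α₁ * d) ≤ κ ^ 2 * jb x ^ (α₁ * d) :=
    Real.rpow_le_mul_rpow_of_exponent_le hy0.le hx
      (one_le_pow₀ hκ) hp hpq (by nlinarith)
  have hmono : jb y ^ (α₁ * d) ≤ jb y ^ (α₂ * d) :=
    Real.rpow_le_rpow_of_exponent_le (one_le_jb y) hpq
  constructor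
  · calc jb y ^ (α₁ * d) ≤ κ ^ 2 * jb x ^ (α₁ * d) := hyx
      _ ≤ κ ^ 2 * (κ * (volume A).toReal) := by gcongr
      _ = κ ^ 3 * (volume A).toReal := by ring
  · calc (volume A).toReal ≤ κ * jb x ^ (α₁ * d) := hAx'
      _ ≤ κ * (κ ^ 2 * jb y ^ (α₁ * d)) := by gcongr
      _ ≤ κ * (κ ^ 2 * jb y ^ (α₂ * d)) := by gcongr
      _ = κ ^ 3 * jb y ^ (α₂ * d) := by ring

lemma card_le_of_forall_inter_nonempty {d n : ℕ} {ι : Type*} {κ K α₁ α₂ : ℝ} (hκ : 1 ≤ κ)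
    (hK : 0 ≤ K) (h1 : 0 ≤ α₁) (h2 : α₁ ≤ α₂) {Q : ι → Set (EuclideanSpace ℝ (Fin d))}
    {P : Set (EuclideanSpace ℝ (Fin d))} {y : EuclideanSpace ℝ (Fin d)}
    (hQm : ∀ j, MeasurableSet (Q j)) (hQadm : ∀ j, {j' | (Q j ∩ Q j').Nonempty}.encard ≤ n)
    (hQμ : ∀ j, IsMeasureComparable κ α₁ (Q j)) (hPμ : IsMeasureComparable κ α₂ P)
    (hQball : ∀ j, IsBallComparable K (Q j)) (hPball : IsBallComparable K P) (hy : y ∈ P)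
    (S : Finset ι) (hS : ∀ j ∈ S, (Q j ∩ P).Nonempty) :
    (#S : ℝ) ≤ n * (4 * K) ^ d * κ ^ 6 * jb y ^ ((d : ℝ) * (α₂ - α₁)) := by
  set t := jb y
  set M := κ ^ 3 * t ^ (α₂ * d)
  have ht : 0 < t := zero_lt_one.trans_le (one_le_jb y)
  have hM : 0 ≤ M := by positivity
  have hle_ofReal : ∀ {A : Set (EuclideanSpace ℝ (Fin d))}, IsBallComparable K A →
      (volume A).toReal ≤ M → volume A ≤ .ofReal M :=
    fun hA h => (le_ofReal_iff_toReal_le (hA.measure_ne_top volume) hM).2 h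
  have hQ : ∀ j ∈ S, t ^ (α₁ * d) ≤ κ ^ 3 * (volume (Q j)).toReal ∧ (volume (Q j)).toReal ≤ M :=
    fun j hj => (hQμ j).bounds_of_inter_nonempty hκ h1 h2 hPμ (hS j hj) hy
  have hP : volume P ≤ .ofReal M := hle_ofReal hPball <| (hPμ y hy).2.trans <|
    mul_le_mul_of_nonneg_right (le_self_pow₀ hκ (by norm_num)) (by positivity)
  have hball : ∀ j ∈ S, ∃ r, Q j ⊆ closedBall y r ∧
      volume (closedBall y r) ≤ .ofReal ((4 * K) ^ d * M) := fun j hj => by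
    obtain ⟨r, hsub, hr⟩ :=
      (hQball j).exists_closedBall_superset_measure_le volume hK hPball (hS j hj) hy
    refine ⟨r, hsub, hr.trans ?_⟩
    rw [finrank_euclideanSpace_fin, ENNReal.ofReal_mul (by positivity)]
    gcongr
    exact max_le (hle_ofReal (hQball j) (hQ j hj).2) hP
  choose! r hr using hball
  have hsum : ∑ j ∈ S, volume (Q j) ≤ .ofReal (n * ((4 * K) ^ d * M)) := calc
    _ ≤ n * volume (⋃ j ∈ S, Q j) := sum_measure_le_mul_measure_biUnion volume hQm hQadm S
    _ ≤ n * volume (⋃ j ∈ S, closedBall y (r j)) := by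
      gcongr with j hj; exact (hr j hj).1
    _ ≤ n * .ofReal ((4 * K) ^ d * M) := by
      gcongr; exact measure_biUnion_closedBall_le volume S y r fun j hj => (hr j hj).2
    _ = .ofReal (n * ((4 * K) ^ d * M)) := by
      rw [ENNReal.ofReal_mul n.cast_nonneg, ofReal_natCast]
  have hsum_real : ∑ j ∈ S, (volume (Q j)).toReal ≤ n * ((4 * K) ^ d * M) := by
    rw [← toReal_sum fun j _ => (hQball j).measure_ne_top volume]
    exact toReal_le_of_le_ofReal (by positivity) hsum
  have hsplit : t ^ (α₂ * d) = t ^ (α₁ * d) * t ^ ((d : ℝ) * (α₂ - α₁)) := by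
    rw [← Real.rpow_add ht]; ring_nf
  refine le_of_mul_le_mul_right ?_ (Real.rpow_pos_of_pos ht (α₁ * d))
  calc (#S : ℝ) * t ^ (α₁ * d) = ∑ j ∈ S, t ^ (α₁ * d) := by rw [sum_const, nsmul_eq_mul]
    _ ≤ ∑ j ∈ S, κ ^ 3 * (volume (Q j)).toReal := sum_le_sum fun j hj => (hQ j hj).1
    _ ≤ κ ^ 3 * (n * ((4 * K) ^ d * M)) := by rw [← mul_sum]; gcongr
    _ = n * (4 * K) ^ d * κ ^ 6 * t ^ ((d : ℝ) * (α₂ - α₁)) * t ^ (α₁ * d) := by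
      simp only [M, hsplit]; ring

theorem stmt11_general {d n₀ : ℕ} {J I : Type*}
    (α₁ α₂ κ K : ℝ) (h1 : 0 ≤ α₁) (h2 : α₁ ≤ α₂) (hκ : 1 ≤ κ) (hK : 1 ≤ K)
    (Q : J → Set (EuclideanSpace ℝ (Fin d))) (P : I → Set (EuclideanSpace ℝ (Fin d)))
    (ξ : I → EuclideanSpace ℝ (Fin d))
    (hQm : ∀ j, MeasurableSet (Q j))
    (hQadm : ∀ j, {j' | (Q j ∩ Q j').Nonempty}.encard ≤ n₀)
    (hQμ : ∀ j, ∀ x ∈ Q j, κ⁻¹ * jb x ^ (α₁ * d) ≤ (volume (Q j)).toReal ∧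
        (volume (Q j)).toReal ≤ κ * jb x ^ (α₁ * d))
    (hPμ : ∀ i, ∀ x ∈ P i, κ⁻¹ * jb x ^ (α₂ * d) ≤ (volume (P i)).toReal ∧
        (volume (P i)).toReal ≤ κ * jb x ^ (α₂ * d))
    (hQball : ∀ j, ∃ (a b : EuclideanSpace ℝ (Fin d)) (ρ R : ℝ), 0 < ρ ∧
        Metric.closedBall a ρ ⊆ Q j ∧ Q j ⊆ Metric.closedBall b R ∧ R ≤ K * ρ)
    (hPball : ∀ i, ∃ (a b : EuclideanSpace ℝ (Fin d)) (ρ R : ℝ), 0 < ρ ∧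
        Metric.closedBall a ρ ⊆ P i ∧ P i ⊆ Metric.closedBall b R ∧ R ≤ K * ρ)
    (hξ : ∀ i, ξ i ∈ P i) :
    ∃ c : ℝ, 0 < c ∧ ∀ i, {j | (Q j ∩ P i).Nonempty}.Finite ∧
      ({j | (Q j ∩ P i).Nonempty}.ncard : ℝ) ≤ c * jb (ξ i) ^ ((d : ℝ) * (α₂ - α₁)) := by
  have hκ0 : 0 < κ := zero_lt_one.trans_le hκ
  have hK0 : 0 < K := zero_lt_one.trans_le hK
  refine ⟨(n₀ + 1) * (4 * K) ^ d * κ ^ 6, by positivity, fun i =>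
    Set.finite_and_ncard_le_of_forall_finset_card_le fun S hS => ?_⟩
  calc (#S : ℝ) ≤ n₀ * (4 * K) ^ d * κ ^ 6 * jb (ξ i) ^ ((d : ℝ) * (α₂ - α₁)) :=
        card_le_of_forall_inter_nonempty hκ hK0.le h1 h2 hQm hQadm hQμ (hPμ i) hQball (hPball i)
          (hξ i) S fun j hj => hS hj
    _ ≤ (n₀ + 1) * (4 * K) ^ d * κ ^ 6 * jb (ξ i) ^ ((d : ℝ) * (α₂ - α₁)) := by
        have hξ0 : 0 ≤ jb (ξ i) := zero_le_one.trans (one_le_jb (ξ i))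
        gcongr; linarith

/-- If {Q_j} is an α₁-covering and {P_i} an α₂-covering (0 ≤ α₁ ≤ α₂ ≤ 1), with
points ξ_i ∈ P_i, then for Ω_i = {j : Q_j ∩ P_i ≠ ∅} there is c > 0 with
card Ω_i ≤ c⟨ξ_i⟩^{d(α₂-α₁)} for all i. -/
theorem stmt11 {d n₀ : ℕ} {J I : Type*} [Countable J] [Countable I]
    (α₁ α₂ κ K : ℝ) (h1 : 0 ≤ α₁) (h2 : α₁ ≤ α₂) (h3 : α₂ ≤ 1) (hκ : 1 ≤ κ) (hK : 1 ≤ K)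
    (Q : J → Set (EuclideanSpace ℝ (Fin d))) (P : I → Set (EuclideanSpace ℝ (Fin d)))
    (η : J → EuclideanSpace ℝ (Fin d)) (ξ : I → EuclideanSpace ℝ (Fin d))
    (hQm : ∀ j, MeasurableSet (Q j)) (hPm : ∀ i, MeasurableSet (P i))
    (hQcov : ⋃ j, Q j = Set.univ) (hPcov : ⋃ i, P i = Set.univ)
    (hQadm : ∀ j, {j' | (Q j ∩ Q j').Nonempty}.encard ≤ n₀)
    (hPadm : ∀ i, {i' | (P i ∩ P i').Nonempty}.encard ≤ n₀)
    (hQμ : ∀ j, ∀ x ∈ Q j, κ⁻¹ * jb x ^ (α₁ * d) ≤ (volume (Q j)).toReal ∧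
        (volume (Q j)).toReal ≤ κ * jb x ^ (α₁ * d))
    (hPμ : ∀ i, ∀ x ∈ P i, κ⁻¹ * jb x ^ (α₂ * d) ≤ (volume (P i)).toReal ∧
        (volume (P i)).toReal ≤ κ * jb x ^ (α₂ * d))
    (hQball : ∀ j, ∃ (a b : EuclideanSpace ℝ (Fin d)) (ρ R : ℝ), 0 < ρ ∧
        Metric.closedBall a ρ ⊆ Q j ∧ Q j ⊆ Metric.closedBall b R ∧ R ≤ K * ρ)
    (hPball : ∀ i, ∃ (a b : EuclideanSpace ℝ (Fin d)) (ρ R : ℝ), 0 < ρ ∧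
        Metric.closedBall a ρ ⊆ P i ∧ P i ⊆ Metric.closedBall b R ∧ R ≤ K * ρ)
    (hη : ∀ j, η j ∈ Q j) (hξ : ∀ i, ξ i ∈ P i) :
    ∃ c : ℝ, 0 < c ∧ ∀ i, {j | (Q j ∩ P i).Nonempty}.Finite ∧
      ({j | (Q j ∩ P i).Nonempty}.ncard : ℝ) ≤ c * jb (ξ i) ^ ((d : ℝ) * (α₂ - α₁)) :=
  stmt11_general α₁ α₂ κ K h1 h2 hκ hK Q P ξ hQm hQadm hQμ hPμ hQball hPball hξ
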